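/- For the 2D bicrossproduct model with metric g = dr⊗dr + b v⊗v (v = r dt − t dr), the Laplace–Beltrami operator is □f = (2/r)∂_r f + ∂_r² f + b^{−1} ∂_v² f, where ∂_v f = (1/r) f_{,t} and ∂_r f = f_{,r} + (t/r) f_{,t}. -/

import Mathlib

/-- Partial derivative of `f : (Fin n → ℝ) → ℝ` in the `i`-th coordinate direction. -/
noncomputable def pd {n : ℕ} (i : Fin n) (f : (Fin n → ℝ) → ℝ) (x : Fin n → ℝ) : ℝ :=
  fderiv ℝ f x (Pi.single i 1)

/-- The 2D bicrossproduct-model metric `g = dr⊗dr + b v⊗v`, `v = r dt − t dr`,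
coordinates `x = (t, r)`. -/
noncomputable def gBic (b : ℝ) (μ ν : Fin 2) (x : Fin 2 → ℝ) : ℝ :=
  if μ = 0 ∧ ν = 0 then b * (x 1)^2
  else if (μ = 0 ∧ ν = 1) ∨ (μ = 1 ∧ ν = 0) then -(b * (x 1) * (x 0))
  else 1 + b * (x 0)^2

/-- The inverse bicrossproduct metric. -/
noncomputable def ginvBic (b : ℝ) (μ ν : Fin 2) (x : Fin 2 → ℝ) : ℝ :=
  if μ = 0 ∧ ν = 0 then (1 + b * (x 0)^2) / (b * (x 1)^2)
  else if (μ = 0 ∧ ν = 1) ∨ (μ = 1 ∧ ν = 0) then x 0 / x 1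
  else 1

/-- Levi-Civita Christoffel symbols of the bicrossproduct metric. -/
noncomputable def ΓBic (b : ℝ) (μ α β : Fin 2) (x : Fin 2 → ℝ) : ℝ :=
  (1/2) * ∑ ν, ginvBic b μ ν x *
    (pd β (gBic b ν α) x + pd α (gBic b ν β) x - pd ν (gBic b α β) x)

/-- The Laplace–Beltrami operator `□f = g^{μν}(f_{,μν} − Γ̂^γ_{μν} f_{,γ})`. -/
noncomputable def lapBic (b : ℝ) (f : (Fin 2 → ℝ) → ℝ) (x : Fin 2 → ℝ) : ℝ :=
  ∑ μ, ∑ ν, ginvBic b μ ν x *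
    (pd μ (fun y => pd ν f y) x - ∑ γ, ΓBic b γ μ ν x * pd γ f x)

/-- The vector field `∂_r = ∂/∂r + (t/r)∂/∂t`, dual to `dr` in the coframe `{v, dr}`. -/
noncomputable def Dr (f : (Fin 2 → ℝ) → ℝ) (x : Fin 2 → ℝ) : ℝ :=
  pd 1 f x + (x 0 / x 1) * pd 0 f x

/-- The vector field `∂_v = (1/r)∂/∂t`, dual to `v` in the coframe `{v, dr}`. -/
noncomputable def Dv (f : (Fin 2 → ℝ) → ℝ) (x : Fin 2 → ℝ) : ℝ :=
  (1 / x 1) * pd 0 f x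

section pdCalc

variable {n : ℕ}

lemma diff_coord (j : Fin n) {x : Fin n → ℝ} :
    DifferentiableAt ℝ (fun y : Fin n → ℝ => y j) x :=
  (ContinuousLinearMap.proj j : (Fin n → ℝ) →L[ℝ] ℝ).differentiableAt

lemma pd_add (i : Fin n) {f g : (Fin n → ℝ) → ℝ} {x : Fin n → ℝ}
    (hf : DifferentiableAt ℝ f x) (hg : DifferentiableAt ℝ g x) :
    pd i (fun y => f y + g y) x = pd i f x + pd i g x := by
  simp [pd, fderiv_fun_add hf hg]

lemma pd_mul (i : Fin n) {f g : (Fin n → ℝ) → ℝ} {x : Fin n → ℝ}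
    (hf : DifferentiableAt ℝ f x) (hg : DifferentiableAt ℝ g x) :
    pd i (fun y => f y * g y) x = pd i f x * g x + f x * pd i g x := by
  simp [pd, fderiv_fun_mul hf hg]; ring

lemma pd_const (i : Fin n) (c : ℝ) (x : Fin n → ℝ) : pd i (fun _ => c) x = 0 := by
  simp [pd]

lemma pd_const_mul (i : Fin n) {f : (Fin n → ℝ) → ℝ} {x : Fin n → ℝ}
    (hf : DifferentiableAt ℝ f x) (c : ℝ) :
    pd i (fun y => c * f y) x = c * pd i f x := by
  simp [pd, fderiv_const_mul hf]

lemma pd_coord (i j : Fin n) (x : Fin n → ℝ) :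
    pd i (fun y : Fin n → ℝ => y j) x = if j = i then 1 else 0 := by
  have h : fderiv ℝ (fun y : Fin n → ℝ => y j) x
      = (ContinuousLinearMap.proj j : (Fin n → ℝ) →L[ℝ] ℝ) :=
    (ContinuousLinearMap.proj j : (Fin n → ℝ) →L[ℝ] ℝ).fderiv
  simp [pd, h, Pi.single_apply]

lemma contDiff_pd (i : Fin n) {f : (Fin n → ℝ) → ℝ} (hf : ContDiff ℝ (⊤ : ℕ∞) f) :
    ContDiff ℝ (⊤ : ℕ∞) (pd i f) :=
  (hf.fderiv_right (by simp)).clm_apply contDiff_const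

end pdCalc

lemma diff_inv1 {x : Fin 2 → ℝ} (hx : x 1 ≠ 0) :
    DifferentiableAt ℝ (fun y : Fin 2 → ℝ => (y 1)⁻¹) x :=
  ((ContinuousLinearMap.proj 1 : (Fin 2 → ℝ) →L[ℝ] ℝ).differentiableAt).inv hx

lemma pd_inv1 {x : Fin 2 → ℝ} (hx : x 1 ≠ 0) (i : Fin 2) :
    pd i (fun y : Fin 2 → ℝ => (y 1)⁻¹) x
      = -((if (1:Fin 2) = i then (1:ℝ) else 0) / (x 1)^2) := by
  have h : HasFDerivAt (fun y : Fin 2 → ℝ => (y 1)⁻¹)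
      ((-ContinuousLinearMap.mulLeftRight ℝ ℝ (x 1)⁻¹ (x 1)⁻¹).comp
        (ContinuousLinearMap.proj 1 : (Fin 2 → ℝ) →L[ℝ] ℝ)) x :=
    (hasFDerivAt_inv' hx).comp x
      (ContinuousLinearMap.proj 1 : (Fin 2 → ℝ) →L[ℝ] ℝ).hasFDerivAt
  rw [pd, h.fderiv]
  simp [Pi.single_apply]
  split
  · field_simp
  · simp

lemma pd_cmul (c : ℝ) (j k i : Fin 2) (x : Fin 2 → ℝ) :
    pd i (fun y : Fin 2 → ℝ => c * (y j * y k)) x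
      = c * ((if j = i then (1:ℝ) else 0) * x k + x j * (if k = i then (1:ℝ) else 0)) := by
  rw [pd_const_mul i ((diff_coord j).fun_mul (diff_coord k)) c,
      pd_mul i (diff_coord j) (diff_coord k), pd_coord, pd_coord]

lemma gBic00 (b : ℝ) : gBic b 0 0 = fun y => b * (y 1 * y 1) := by
  funext y; simp only [gBic]; norm_num [sq, mul_assoc]

lemma gBic01 (b : ℝ) : gBic b 0 1 = fun y => (-b) * (y 1 * y 0) := by
  funext y; simp only [gBic]; norm_num [sq, mul_assoc]

lemma gBic10 (b : ℝ) : gBic b 1 0 = fun y => (-b) * (y 1 * y 0) := by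
  funext y; simp only [gBic]; norm_num [sq, mul_assoc]

lemma gBic11 (b : ℝ) : gBic b 1 1 = fun y => 1 + b * (y 0 * y 0) := by
  funext y; simp only [gBic]; norm_num [sq, mul_assoc]

lemma gi00 (b : ℝ) (x : Fin 2 → ℝ) :
    ginvBic b 0 0 x = (1 + b * (x 0)^2) / (b * (x 1)^2) := by
  simp only [ginvBic]; norm_num

lemma gi01 (b : ℝ) (x : Fin 2 → ℝ) : ginvBic b 0 1 x = x 0 / x 1 := by
  simp only [ginvBic]; norm_num

lemma gi10 (b : ℝ) (x : Fin 2 → ℝ) : ginvBic b 1 0 x = x 0 / x 1 := by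
  simp only [ginvBic]; norm_num

lemma gi11 (b : ℝ) (x : Fin 2 → ℝ) : ginvBic b 1 1 x = 1 := by
  simp only [ginvBic]; norm_num

lemma pdg000 (b : ℝ) (x : Fin 2 → ℝ) : pd 0 (gBic b 0 0) x = 0 := by
  rw [gBic00, pd_cmul]; norm_num
lemma pdg001 (b : ℝ) (x : Fin 2 → ℝ) : pd 1 (gBic b 0 0) x = 2*(b*x 1) := by
  rw [gBic00, pd_cmul]; norm_num; ring
lemma pdg010 (b : ℝ) (x : Fin 2 → ℝ) : pd 0 (gBic b 0 1) x = -(b*x 1) := by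
  rw [gBic01, pd_cmul]; norm_num
lemma pdg011 (b : ℝ) (x : Fin 2 → ℝ) : pd 1 (gBic b 0 1) x = -(b*x 0) := by
  rw [gBic01, pd_cmul]; norm_num
lemma pdg100 (b : ℝ) (x : Fin 2 → ℝ) : pd 0 (gBic b 1 0) x = -(b*x 1) := by
  rw [gBic10, pd_cmul]; norm_num
lemma pdg101 (b : ℝ) (x : Fin 2 → ℝ) : pd 1 (gBic b 1 0) x = -(b*x 0) := by
  rw [gBic10, pd_cmul]; norm_num
lemma pdg110 (b : ℝ) (x : Fin 2 → ℝ) : pd 0 (gBic b 1 1) x = 2*(b*x 0) := by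
  rw [gBic11, pd_add 0 (differentiableAt_const 1)
    (((diff_coord 0).fun_mul (diff_coord 0)).const_mul b), pd_const, pd_cmul]
  norm_num; ring
lemma pdg111 (b : ℝ) (x : Fin 2 → ℝ) : pd 1 (gBic b 1 1) x = 0 := by
  rw [gBic11, pd_add 1 (differentiableAt_const 1)
    (((diff_coord 0).fun_mul (diff_coord 0)).const_mul b), pd_const, pd_cmul]
  norm_num

lemma Γ000 (b : ℝ) (x : Fin 2 → ℝ) (hb : b ≠ 0) (hx : x 1 ≠ 0) :
    ΓBic b 0 0 0 x = -(2*(b*x 0)) := by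
  simp only [ΓBic, Fin.sum_univ_two, gi00, gi01, pdg000, pdg001, pdg010, pdg011,
    pdg100, pdg101, pdg110, pdg111]
  field_simp
  ring

lemma Γ100 (b : ℝ) (x : Fin 2 → ℝ) (hb : b ≠ 0) (hx : x 1 ≠ 0) :
    ΓBic b 1 0 0 x = -(2*(b*x 1)) := by
  simp only [ΓBic, Fin.sum_univ_two, gi10, gi11, pdg000, pdg001, pdg010, pdg011,
    pdg100, pdg101, pdg110, pdg111]
  field_simp
  ring

lemma Γ001 (b : ℝ) (x : Fin 2 → ℝ) (hb : b ≠ 0) (hx : x 1 ≠ 0) :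
    ΓBic b 0 0 1 x = (1 + 2*(b*(x 0)^2)) / x 1 := by
  simp only [ΓBic, Fin.sum_univ_two, gi00, gi01, pdg000, pdg001, pdg010, pdg011,
    pdg100, pdg101, pdg110, pdg111]
  field_simp
  ring

lemma Γ010 (b : ℝ) (x : Fin 2 → ℝ) (hb : b ≠ 0) (hx : x 1 ≠ 0) :
    ΓBic b 0 1 0 x = (1 + 2*(b*(x 0)^2)) / x 1 := by
  simp only [ΓBic, Fin.sum_univ_two, gi00, gi01, pdg000, pdg001, pdg010, pdg011,
    pdg100, pdg101, pdg110, pdg111]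
  field_simp
  ring

lemma Γ101 (b : ℝ) (x : Fin 2 → ℝ) (hb : b ≠ 0) (hx : x 1 ≠ 0) :
    ΓBic b 1 0 1 x = 2*(b*x 0) := by
  simp only [ΓBic, Fin.sum_univ_two, gi10, gi11, pdg000, pdg001, pdg010, pdg011,
    pdg100, pdg101, pdg110, pdg111]
  field_simp
  ring

lemma Γ110 (b : ℝ) (x : Fin 2 → ℝ) (hb : b ≠ 0) (hx : x 1 ≠ 0) :
    ΓBic b 1 1 0 x = 2*(b*x 0) := by
  simp only [ΓBic, Fin.sum_univ_two, gi10, gi11, pdg000, pdg001, pdg010, pdg011,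
    pdg100, pdg101, pdg110, pdg111]
  field_simp
  ring

lemma Γ011 (b : ℝ) (x : Fin 2 → ℝ) (hb : b ≠ 0) (hx : x 1 ≠ 0) :
    ΓBic b 0 1 1 x = -(2*(x 0)*(1 + b*(x 0)^2)/(x 1)^2) := by
  simp only [ΓBic, Fin.sum_univ_two, gi00, gi01, pdg000, pdg001, pdg010, pdg011,
    pdg100, pdg101, pdg110, pdg111]
  field_simp
  ring

lemma Γ111 (b : ℝ) (x : Fin 2 → ℝ) (hb : b ≠ 0) (hx : x 1 ≠ 0) :
    ΓBic b 1 1 1 x = -(2*(b*(x 0)^2)/x 1) := by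
  simp only [ΓBic, Fin.sum_univ_two, gi10, gi11, pdg000, pdg001, pdg010, pdg011,
    pdg100, pdg101, pdg110, pdg111]
  field_simp
  ring

/-- For the 2D bicrossproduct model the Laplace–Beltrami operator is
`□f = (2/r)∂_r f + ∂_r² f + b⁻¹ ∂_v² f`. -/
theorem stmt15 (b : ℝ) (hb : b ≠ 0) (f : (Fin 2 → ℝ) → ℝ) (hf : ContDiff ℝ (⊤ : ℕ∞) f) :
    ∀ x : Fin 2 → ℝ, 0 < x 1 →
      lapBic b f x = (2 / x 1) * Dr f x + Dr (fun y => Dr f y) x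
        + b⁻¹ * Dv (fun y => Dv f y) x := by
  intro x hx
  have hr : x 1 ≠ 0 := ne_of_gt hx
  have c0 : ContDiff ℝ (⊤ : ℕ∞) (pd 0 f) := contDiff_pd 0 hf
  have c1 : ContDiff ℝ (⊤ : ℕ∞) (pd 1 f) := contDiff_pd 1 hf
  have d0 : DifferentiableAt ℝ (pd 0 f) x := (c0.differentiable (by simp)).differentiableAt
  have d1 : DifferentiableAt ℝ (pd 1 f) x := (c1.differentiable (by simp)).differentiableAt
  have hDv : (fun y => Dv f y) = fun y => (y 1)⁻¹ * pd 0 f y := by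
    funext y; simp [Dv, one_div]
  have hDr : (fun y => Dr f y) = fun y => pd 1 f y + (y 0 * (y 1)⁻¹) * pd 0 f y := by
    funext y; simp [Dr, div_eq_mul_inv]
  have eDv0 : pd 0 (fun y => Dv f y) x = (x 1)⁻¹ * pd 0 (pd 0 f) x := by
    rw [hDv, pd_mul 0 (diff_inv1 hr) d0, pd_inv1 hr]
    norm_num
  have eDr0 : pd 0 (fun y => Dr f y) x
      = pd 0 (pd 1 f) x + (x 1)⁻¹ * pd 0 f x + (x 0 * (x 1)⁻¹) * pd 0 (pd 0 f) x := by
    rw [hDr, pd_add 0 d1 (((diff_coord 0).fun_mul (diff_inv1 hr)).fun_mul d0),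
        pd_mul 0 ((diff_coord 0).fun_mul (diff_inv1 hr)) d0,
        pd_mul 0 (diff_coord 0) (diff_inv1 hr), pd_coord, pd_inv1 hr]
    norm_num
    ring
  have eDr1 : pd 1 (fun y => Dr f y) x
      = pd 1 (pd 1 f) x + (-(x 0/(x 1)^2)) * pd 0 f x
        + (x 0 * (x 1)⁻¹) * pd 1 (pd 0 f) x := by
    rw [hDr, pd_add 1 d1 (((diff_coord 0).fun_mul (diff_inv1 hr)).fun_mul d0),
        pd_mul 1 ((diff_coord 0).fun_mul (diff_inv1 hr)) d0,
        pd_mul 1 (diff_coord 0) (diff_inv1 hr), pd_coord, pd_inv1 hr]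
    norm_num
    ring
  rw [show Dr (fun y => Dr f y) x
        = pd 1 (fun y => Dr f y) x + (x 0 / x 1) * pd 0 (fun y => Dr f y) x from rfl,
      show Dv (fun y => Dv f y) x = (1 / x 1) * pd 0 (fun y => Dv f y) x from rfl,
      show Dr f x = pd 1 f x + (x 0 / x 1) * pd 0 f x from rfl,
      eDr0, eDr1, eDv0]
  simp only [lapBic, Fin.sum_univ_two, gi00, gi01, gi10, gi11,
    Γ000 b x hb hr, Γ100 b x hb hr, Γ001 b x hb hr, Γ010 b x hb hr,
    Γ101 b x hb hr, Γ110 b x hb hr, Γ011 b x hb hr, Γ111 b x hb hr]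
  field_simp
  ring
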